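/- arXiv:1903.11230 — 2 statements merged into one kernel-verified Lean document; each statement's English description precedes it below -/
import Mathlib

section
/- Let R_{ijkl} be an algebraic curvature tensor on ℝ^n and let 0 ≤ ν ≤ n. Define, for each pair 1 ≤ i,j ≤ n, the endomorphism 𝓡^ν_{ij} of Λ^ν(ℝ^n) by 𝓡^ν_{ij} = −∑_{a=1}^ν 𝓡^{ν,a}_{ij}, where 𝓡^{ν,a}_{ij}(e_{i_1}∧⋯∧e_{i_ν}) = ∑_{p=1}^n R_{i_a p i j}·(e_{i_1}∧⋯∧e_{i_ν} with e_{i_a} replaced by e_p). Then ∑_{i,j=1}^n Tr(𝓡^ν_{ij} ∘ 𝓡^ν_{ij}) = −C(n−2, ν−1)·|R|². -/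
/-! The operator `𝓡 i j` is the derivation of `⋀^ν ℝ^n` extending the skew endomorphism
`B = R · · i j` of `ℝ^n`: it replaces one vector `e_k` of a wedge by `e_p`. Hence the
`e_S`-coordinate of `(𝓡 i j)² e_S` only sees the round trips `k → p → k` with `k ∈ S`, `p ∉ S`
(if `p ∈ S` the intermediate wedge has a repeated factor and vanishes), each contributing
`B k p * B p k = -(B k p)²`. Every ordered pair `k ≠ p` occurs for exactly `C(n-2, ν-1)` sets `S`
of size `ν`. -/

open ExteriorAlgebra

/-- The wedge `e_{ι 0} ∧ ⋯ ∧ e_{ι (ν-1)}` of standard basis vectors of `ℝ^n`,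
as an element of the `ν`-th exterior power `⋀[ℝ]^ν (ℝ^n)`. -/
noncomputable def stdWedge (n ν : ℕ) (ι : Fin ν → Fin n) : ⋀[ℝ]^ν (Fin n → ℝ) :=
  ⟨ExteriorAlgebra.ιMulti ℝ ν (fun a => Pi.single (ι a) (1 : ℝ)),
   ExteriorAlgebra.ιMulti_range ℝ ν ⟨_, rfl⟩⟩

/-- Binomial coefficient `C(m, k)` defined for all integers, with the convention
that it vanishes if `m < 0`, `k < 0` or `m < k`. -/
def chooseZ (m k : ℤ) : ℤ :=
  if 0 ≤ m ∧ 0 ≤ k ∧ k ≤ m then (m.toNat.choose k.toNat : ℤ) else 0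

lemma chooseZ_natCast (a b : ℕ) : chooseZ a b = a.choose b := by
  rcases le_or_gt b a with hba | hab
  · simp [chooseZ, hba]
  · simp [chooseZ, hab.not_ge, Nat.choose_eq_zero_of_lt hab]

lemma Finset.sum_orderEmbOfFin {α M : Type*} [LinearOrder α] [AddCommMonoid M] (s : Finset α)
    {k : ℕ} (h : s.card = k) (g : α → M) :
    ∑ a, g (s.orderEmbOfFin h a) = ∑ x ∈ s, g x := by
  conv_rhs => rw [← Finset.image_orderEmbOfFin_univ s h]
  exact (Finset.sum_image fun a _ b _ hab => (s.orderEmbOfFin h).injective hab).symm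

open Finset in
lemma Finset.card_filter_powersetCard_mem_notMem {α : Type*} [Fintype α] [DecidableEq α]
    (m : ℕ) {k p : α} (hkp : k ≠ p) :
    #((powersetCard (m + 1) univ).filter fun t => k ∈ t ∧ p ∉ t) =
      (Fintype.card α - 2).choose m := by
  have hfilter : ((powersetCard (m + 1) univ).filter fun t => k ∈ t ∧ p ∉ t) =
      ((univ.erase p).powersetCard (m + 1)).filter ({k} ⊆ ·) := by
    ext t
    simp only [mem_filter, mem_powersetCard, subset_erase, subset_univ, true_and,
      singleton_subset_iff]
    tauto
  rw [hfilter, card_filter_powersetCard_subset _ _ _ (by simpa using hkp) (by simp)]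
  simp only [mem_univ, card_erase_of_mem, card_univ, card_singleton, add_tsub_cancel_right,
    Nat.sub_sub]

open Finset in
lemma Finset.sum_powersetCard_sum_mem_sum_compl {α M : Type*} [Fintype α] [DecidableEq α]
    [AddCommMonoid M] (m : ℕ) (F : α → α → M) (hF : ∀ k, F k k = 0) :
    ∑ s : Set.powersetCard α (m + 1), ∑ k ∈ (s : Finset α), ∑ p ∈ (s : Finset α)ᶜ, F k p =
      (Fintype.card α - 2).choose m • ∑ k, ∑ p, F k p := by
  have hind : ∀ s : Finset α, ∑ k ∈ s, ∑ p ∈ sᶜ, F k p =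
      ∑ k, ∑ p, if k ∈ s ∧ p ∉ s then F k p else 0 := fun s => by
    simp only [← Finset.mem_compl, ite_and, sum_ite_irrel, sum_ite_mem, Finset.univ_inter,
      sum_const_zero]
  rw [← sum_subtype (Finset.powersetCard (m + 1) univ)
    (fun t => by simp [Set.powersetCard.mem_iff]) fun s : Finset α => ∑ k ∈ s, ∑ p ∈ sᶜ, F k p]
  simp only [hind, smul_sum]
  rw [sum_comm]
  refine sum_congr rfl fun k _ => ?_
  rw [sum_comm]
  refine sum_congr rfl fun p _ => ?_
  rcases eq_or_ne k p with rfl | hkp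
  · simp [hF]
  · rw [sum_ite, sum_const_zero, add_zero, sum_const, card_filter_powersetCard_mem_notMem m hkp]

open Set.powersetCard Function

noncomputable abbrev stdWedgeBasis (n ν : ℕ) :
    Module.Basis (Set.powersetCard (Fin n) ν) ℝ (⋀[ℝ]^ν (Fin n → ℝ)) :=
  (Pi.basisFun ℝ (Fin n)).exteriorPower ν

section

variable {n ν : ℕ}

lemma stdWedge_eq_ιMulti (ι : Fin ν → Fin n) :
    stdWedge n ν ι = exteriorPower.ιMulti ℝ ν (fun a => Pi.single (ι a) 1) :=
  rfl

lemma stdWedgeBasis_apply (s : Set.powersetCard (Fin n) ν) :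
    stdWedgeBasis n ν s = stdWedge n ν (ofFinEmbEquiv.symm s) := by
  rw [exteriorPower.basis_apply, exteriorPower.ιMulti_family]
  ext1
  simp [stdWedge, comp_def]

lemma stdWedge_eq_zero_of_not_injective {ι : Fin ν → Fin n} (hι : ¬ Injective ι) :
    stdWedge n ν ι = 0 := by
  obtain ⟨a, b, hab, hne⟩ : ∃ a b, ι a = ι b ∧ a ≠ b := by
    simpa [Injective] using hι
  rw [stdWedge_eq_ιMulti]
  exact (exteriorPower.ιMulti ℝ ν).map_eq_zero_of_eq _ (congrArg (Pi.single · 1) hab) hne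

lemma stdWedgeBasis_coord_stdWedge_of_notMem (s : Set.powersetCard (Fin n) ν)
    {ι : Fin ν → Fin n} {a : Fin ν} (ha : ι a ∉ s) :
    (stdWedgeBasis n ν).coord s (stdWedge n ν ι) = 0 := by
  rw [exteriorPower.basis_coord, stdWedge_eq_ιMulti, exteriorPower.ιMultiDual_apply_ιMulti]
  refine Matrix.det_eq_zero_of_row_eq_zero a fun b => ?_
  have hb : ofFinEmbEquiv.symm s b ∈ s := (mem_range_ofFinEmbEquiv_symm_iff_mem s _).mp ⟨b, rfl⟩
  simp only [Matrix.of_apply, Module.Basis.coord_apply, Pi.basisFun_repr, Pi.single_apply,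
    ite_eq_right_iff]
  exact fun h => absurd (h ▸ hb) ha

lemma stdWedgeBasis_coord_stdWedge_update (s : Set.powersetCard (Fin n) ν) (a : Fin ν)
    (q : Fin n) :
    (stdWedgeBasis n ν).coord s (stdWedge n ν (update (ofFinEmbEquiv.symm s) a q)) =
      if q = ofFinEmbEquiv.symm s a then 1 else 0 := by
  split_ifs with hq
  · rw [hq, update_eq_self, ← stdWedgeBasis_apply, Module.Basis.coord_apply,
      Module.Basis.repr_self, Finsupp.single_eq_same]
  by_cases hqs : q ∈ s
  · obtain ⟨c, hc⟩ := (mem_range_ofFinEmbEquiv_symm_iff_mem s q).mpr hqs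
    have hca : c ≠ a := by rintro rfl; exact hq hc.symm
    rw [stdWedge_eq_zero_of_not_injective, map_zero]
    intro hinj
    exact hca (hinj (by rw [update_self, update_of_ne hca, hc]))
  · exact stdWedgeBasis_coord_stdWedge_of_notMem s (a := a) (by rwa [update_self])

/-- `f` acts on `ν`-vectors as the derivation extending the endomorphism
`e_k ↦ -∑ p, B k p • e_p` of `ℝ^n`. -/
def IsWedgeDerivation (B : Fin n → Fin n → ℝ)
    (f : ⋀[ℝ]^ν (Fin n → ℝ) →ₗ[ℝ] ⋀[ℝ]^ν (Fin n → ℝ)) : Prop :=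
  ∀ ι : Fin ν → Fin n,
    f (stdWedge n ν ι) = -∑ a : Fin ν, ∑ p : Fin n, B (ι a) p • stdWedge n ν (update ι a p)

namespace IsWedgeDerivation

variable {B : Fin n → Fin n → ℝ} {f : ⋀[ℝ]^ν (Fin n → ℝ) →ₗ[ℝ] ⋀[ℝ]^ν (Fin n → ℝ)}

lemma coord_apply_stdWedge_update_of_notMem (hf : IsWedgeDerivation B f)
    (s : Set.powersetCard (Fin n) ν) (a : Fin ν) {p : Fin n} (hp : p ∉ s) :
    (stdWedgeBasis n ν).coord s (f (stdWedge n ν (update (ofFinEmbEquiv.symm s) a p))) =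
      -B p (ofFinEmbEquiv.symm s a) := by
  rw [hf, map_neg, neg_inj, map_sum, Finset.sum_eq_single a]
  · simp only [map_sum, map_smul, smul_eq_mul, update_self, update_idem,
      stdWedgeBasis_coord_stdWedge_update, mul_ite, mul_one, mul_zero, Finset.sum_ite_eq',
      Finset.mem_univ, if_true]
  · intro b _ hba
    rw [map_sum]
    refine Finset.sum_eq_zero fun q _ => ?_
    rw [map_smul, stdWedgeBasis_coord_stdWedge_of_notMem s (a := a), smul_zero]
    rwa [update_of_ne hba.symm, update_self]
  · simp

lemma coord_apply_apply_stdWedgeBasis (hB : ∀ k, B k k = 0) (hf : IsWedgeDerivation B f)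
    (s : Set.powersetCard (Fin n) ν) :
    (stdWedgeBasis n ν).coord s (f (f (stdWedgeBasis n ν s))) =
      ∑ k ∈ (s : Finset (Fin n)), ∑ p ∈ (s : Finset (Fin n))ᶜ, B k p * B p k := by
  rw [stdWedgeBasis_apply, hf]
  simp only [map_neg, map_sum, map_smul, smul_eq_mul]
  set e := ofFinEmbEquiv.symm s
  have hterm : ∀ a p, B (e a) p * (stdWedgeBasis n ν).coord s (f (stdWedge n ν (update e a p))) =
      if p ∈ (s : Finset (Fin n))ᶜ then -(B (e a) p * B p (e a)) else 0 := by
    intro a p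
    by_cases hp : p ∈ s
    · rw [if_neg (Finset.notMem_compl.mpr hp)]
      obtain ⟨c, rfl⟩ := (mem_range_ofFinEmbEquiv_symm_iff_mem s p).mpr hp
      rcases eq_or_ne c a with rfl | hca
      · rw [hB, zero_mul]
      · rw [stdWedge_eq_zero_of_not_injective, map_zero, map_zero, mul_zero]
        intro hinj
        exact hca (hinj (by rw [update_self, update_of_ne hca]))
    · rw [if_pos (Finset.mem_compl.mpr hp), hf.coord_apply_stdWedge_update_of_notMem s a hp,
        mul_neg]
  simp only [hterm, Finset.sum_ite_mem, Finset.univ_inter, Finset.sum_neg_distrib, neg_neg]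
  exact Finset.sum_orderEmbOfFin s.1 s.2 fun k => ∑ p ∈ (s : Finset (Fin n))ᶜ, B k p * B p k

lemma trace_comp_self (hB : ∀ k, B k k = 0) (hf : IsWedgeDerivation B f) :
    LinearMap.trace ℝ _ (f ∘ₗ f) =
      ∑ s : Set.powersetCard (Fin n) ν,
        ∑ k ∈ (s : Finset (Fin n)), ∑ p ∈ (s : Finset (Fin n))ᶜ, B k p * B p k := by
  rw [LinearMap.trace_eq_matrix_trace ℝ (stdWedgeBasis n ν), Matrix.trace]
  refine Finset.sum_congr rfl fun s _ => ?_
  rw [Matrix.diag_apply, LinearMap.toMatrix_apply, ← Module.Basis.coord_apply,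
    LinearMap.comp_apply, hf.coord_apply_apply_stdWedgeBasis hB]

lemma trace_comp_self_of_antisymm (hB : ∀ k l, B k l = -B l k) (hf : IsWedgeDerivation B f) :
    LinearMap.trace ℝ _ (f ∘ₗ f) =
      -(chooseZ ((n : ℤ) - 2) ((ν : ℤ) - 1) : ℝ) * ∑ k, ∑ l, B k l ^ 2 := by
  have hdiag : ∀ k, B k k = 0 := fun k => by linarith [hB k k]
  have hsq : ∀ k l, B k l * B l k = -B k l ^ 2 := fun k l => by rw [hB l k]; ring
  rw [hf.trace_comp_self hdiag]
  simp only [hsq]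
  rcases ν with _ | m
  · have hs : ∀ s : Set.powersetCard (Fin n) 0, (s : Finset (Fin n)) = ∅ := fun s =>
      Finset.card_eq_zero.mp (Set.powersetCard.card_eq s)
    simp [hs, chooseZ]
  rw [Finset.sum_powersetCard_sum_mem_sum_compl m _ (fun k => by simp [hdiag]), Fintype.card_fin]
  rcases lt_or_ge n 2 with hn | hn
  · have hB0 : ∀ k l : Fin n, B k l = 0 := fun k l => by
      rw [show l = k from Fin.ext (by omega), hdiag]
    simp [hB0]
  · rw [show (n : ℤ) - 2 = ((n - 2 : ℕ) : ℤ) by omega,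
      show ((m + 1 : ℕ) : ℤ) - 1 = (m : ℤ) by push_cast; ring, chooseZ_natCast]
    simp [nsmul_eq_mul, Finset.sum_neg_distrib]

end IsWedgeDerivation

end

theorem trace_curvature_forms_sq_general (n ν : ℕ)
    (R : Fin n → Fin n → Fin n → Fin n → ℝ)
    (hskew₁ : ∀ i j k l, R i j k l = - R j i k l)
    (𝓡 : Fin n → Fin n → (⋀[ℝ]^ν (Fin n → ℝ) →ₗ[ℝ] ⋀[ℝ]^ν (Fin n → ℝ)))
    (h𝓡 : ∀ (i j : Fin n) (ι : Fin ν → Fin n),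
      𝓡 i j (stdWedge n ν ι) =
        - ∑ a : Fin ν, ∑ p : Fin n,
            R (ι a) p i j • stdWedge n ν (Function.update ι a p)) :
    ∑ i : Fin n, ∑ j : Fin n, LinearMap.trace ℝ _ (𝓡 i j ∘ₗ 𝓡 i j) =
      - (chooseZ ((n : ℤ) - 2) ((ν : ℤ) - 1) : ℝ) *
        ∑ i : Fin n, ∑ j : Fin n, ∑ k : Fin n, ∑ l : Fin n, (R i j k l) ^ 2 := by
  have htrace : ∀ i j, LinearMap.trace ℝ _ (𝓡 i j ∘ₗ 𝓡 i j) =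
      -(chooseZ ((n : ℤ) - 2) ((ν : ℤ) - 1) : ℝ) * ∑ k, ∑ l, R k l i j ^ 2 := fun i j =>
    IsWedgeDerivation.trace_comp_self_of_antisymm (B := fun k l => R k l i j)
      (fun k l => hskew₁ k l i j) (h𝓡 i j)
  have hswap : ∑ i, ∑ j, ∑ k, ∑ l, R k l i j ^ 2 = ∑ i, ∑ j, ∑ k, ∑ l, R i j k l ^ 2 :=
    calc ∑ i, ∑ j, ∑ k, ∑ l, R k l i j ^ 2
        = ∑ q : Fin n × Fin n, ∑ p : Fin n × Fin n, R p.1 p.2 q.1 q.2 ^ 2 := by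
          simp only [Fintype.sum_prod_type]
      _ = ∑ p : Fin n × Fin n, ∑ q : Fin n × Fin n, R p.1 p.2 q.1 q.2 ^ 2 := Finset.sum_comm
      _ = ∑ i, ∑ j, ∑ k, ∑ l, R i j k l ^ 2 := by simp only [Fintype.sum_prod_type]
  simp only [htrace, ← Finset.mul_sum, hswap]

/-- Formula (7.8) of the paper: for the curvature operators `𝓡^ν_{ij}` of the connection
induced on `ν`-forms (formulas (7.4)–(7.5), expressed in an orthonormal frame),
`∑_{i,j} Tr(𝓡^ν_{ij} ∘ 𝓡^ν_{ij}) = − C(n−2, ν−1)·|R|²`. -/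
theorem trace_curvature_forms_sq (n ν : ℕ) (hn : 1 ≤ n) (hν : ν ≤ n)
    (R : Fin n → Fin n → Fin n → Fin n → ℝ)
    (hskew₁ : ∀ i j k l, R i j k l = - R j i k l)
    (hskew₂ : ∀ i j k l, R i j k l = - R i j l k)
    (hpair : ∀ i j k l, R i j k l = R k l i j)
    (hbianchi : ∀ i j k l, R i j k l + R i k l j + R i l j k = 0)
    (𝓡 : Fin n → Fin n → (⋀[ℝ]^ν (Fin n → ℝ) →ₗ[ℝ] ⋀[ℝ]^ν (Fin n → ℝ)))
    (h𝓡 : ∀ (i j : Fin n) (ι : Fin ν → Fin n),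
      𝓡 i j (stdWedge n ν ι) =
        - ∑ a : Fin ν, ∑ p : Fin n,
            R (ι a) p i j • stdWedge n ν (Function.update ι a p)) :
    ∑ i : Fin n, ∑ j : Fin n, LinearMap.trace ℝ _ (𝓡 i j ∘ₗ 𝓡 i j) =
      - (chooseZ ((n : ℤ) - 2) ((ν : ℤ) - 1) : ℝ) *
        ∑ i : Fin n, ∑ j : Fin n, ∑ k : Fin n, ∑ l : Fin n, (R i j k l) ^ 2 :=
  trace_curvature_forms_sq_general n ν R hskew₁ 𝓡 h𝓡
end

section
/- Let R_{ijkl} be an algebraic curvature tensor on ℝ⁴, and let B and C be the 6×6 symmetric matrices indexed by ordered pairs (i,j), i < j, from {1,2,3,4} (in the order (1,2),(1,3),(1,4),(2,3),(2,4),(3,4)) defined by B_{(ij),(kl)} = δ_{ik}Ric_{jl} + δ_{jl}Ric_{ik} − δ_{il}Ric_{jk} − δ_{jk}Ric_{il} and C_{(ij),(kl)} = R_{ijkl}. Then Tr((B − 2C)²) = S² − 2|Ric|² + |R|²; equivalently, for the operator A₂ on Λ²(ℝ⁴), whose matrix in the basis e_i∧e_j (i<j) is B − 2C, one has Tr(A₂²)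 = S² − 2|Ric|² + |R|². -/
/-- Index set for the ordered pairs `(i,j)`, `i < j`, from `{1,2,3,4}` labelling the
standard basis `e_i ∧ e_j` of `Λ²(ℝ⁴)`. -/
abbrev PairIdx : Type := {p : Fin 4 × Fin 4 // p.1 < p.2}

/-- The Ricci tensor `Ric_{ij} = ∑_p R_{ipjp}`. -/
def ricci4 (R : Fin 4 → Fin 4 → Fin 4 → Fin 4 → ℝ) (i j : Fin 4) : ℝ :=
  ∑ p : Fin 4, R i p j p

/-- Kronecker delta on `Fin 4`. -/
def kdelta (i j : Fin 4) : ℝ := if i = j then 1 else 0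

/-- The matrix `B` with `B_{(ij),(kl)} = δ_{ik}Ric_{jl} + δ_{jl}Ric_{ik}
− δ_{il}Ric_{jk} − δ_{jk}Ric_{il}`. -/
def Bmat (R : Fin 4 → Fin 4 → Fin 4 → Fin 4 → ℝ) : Matrix PairIdx PairIdx ℝ :=
  Matrix.of fun p q =>
    kdelta p.1.1 q.1.1 * ricci4 R p.1.2 q.1.2 + kdelta p.1.2 q.1.2 * ricci4 R p.1.1 q.1.1
      - kdelta p.1.1 q.1.2 * ricci4 R p.1.2 q.1.1 - kdelta p.1.2 q.1.1 * ricci4 R p.1.1 q.1.2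

/-- The matrix `C` with `C_{(ij),(kl)} = R_{ijkl}`. -/
def Cmat (R : Fin 4 → Fin 4 → Fin 4 → Fin 4 → ℝ) : Matrix PairIdx PairIdx ℝ :=
  Matrix.of fun p q => R p.1.1 p.1.2 q.1.1 q.1.2

open Finset

section PairSums

variable {M : Type*} [AddCommMonoid M] {α : Type*} [LinearOrder α] [Fintype α]

theorem two_nsmul_sum_pairs_lt {g : α → α → M} (hsymm : ∀ i j, g i j = g j i)
    (hdiag : ∀ i, g i i = 0) :
    2 • ∑ p : {p : α × α // p.1 < p.2}, g p.1.1 p.1.2 = ∑ i, ∑ j, g i j := by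
  have hpairs : ∑ p : {p : α × α // p.1 < p.2}, g p.1.1 p.1.2
      = ∑ i, ∑ j, if i < j then g i j else 0 := by
    rw [← sum_subtype {p : α × α | p.1 < p.2} (by simp) (fun p => g p.1 p.2), sum_filter,
      Fintype.sum_prod_type]
  have hsplit : ∀ i j, g i j = (if i < j then g i j else 0) + (if j < i then g j i else 0) := by
    intro i j
    rcases lt_trichotomy i j with h | rfl | h
    · simp [h, h.not_gt]
    · simp [hdiag]
    · simp [h, h.not_gt, hsymm i j]
  calc 2 • ∑ p : {p : α × α // p.1 < p.2}, g p.1.1 p.1.2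
      = (∑ i, ∑ j, if i < j then g i j else 0) + ∑ i, ∑ j, if j < i then g j i else 0 := by
        rw [two_nsmul, hpairs, sum_comm (f := fun i j => if j < i then g j i else 0)]
    _ = ∑ i, ∑ j, g i j := by
        simp only [← sum_add_distrib, ← hsplit]

end PairSums

section Tensors

variable {ι : Type*}

def IsSkewInPairs (m : ι → ι → ι → ι → ℝ) : Prop :=
  (∀ i j k l, m j i k l = -m i j k l) ∧ ∀ i j k l, m i j l k = -m i j k l

def ricci [Fintype ι] (R : ι → ι → ι → ι → ℝ) : Matrix ι ι ℝ :=
  Matrix.of fun i j => ∑ p, R i p j p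

theorem ricci_isSymm [Fintype ι] {R : ι → ι → ι → ι → ℝ}
    (hpair : ∀ i j k l, R i j k l = R k l i j) : (ricci R).IsSymm :=
  Matrix.IsSymm.ext fun i j => by simp only [ricci, Matrix.of_apply, hpair i]

/-- The matrix of `Q` acting as a derivation on `Λ²`, `e_k ∧ e_l ↦ Q e_k ∧ e_l + e_k ∧ Q e_l`,
in the redundant coordinates indexed by all pairs `(i, j)`, `(k, l)`. -/
def wedgeDerivation [DecidableEq ι] (Q : Matrix ι ι ℝ) (i j k l : ι) : ℝ :=
  (1 : Matrix ι ι ℝ) i k * Q j l + (1 : Matrix ι ι ℝ) j l * Q i k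
    - (1 : Matrix ι ι ℝ) i l * Q j k - (1 : Matrix ι ι ℝ) j k * Q i l

theorem isSkewInPairs_wedgeDerivation [DecidableEq ι] (Q : Matrix ι ι ℝ) :
    IsSkewInPairs (wedgeDerivation Q) :=
  ⟨fun _ _ _ _ => by simp only [wedgeDerivation]; ring,
    fun _ _ _ _ => by simp only [wedgeDerivation]; ring⟩

variable [Fintype ι] [DecidableEq ι]

theorem sum_wedgeDerivation_mul_wedgeDerivation {Q : Matrix ι ι ℝ} (hQ : Q.IsSymm) :
    ∑ i, ∑ j, ∑ k, ∑ l, wedgeDerivation Q i j k l * wedgeDerivation Q k l i j =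
      4 * (Q.trace ^ 2 + (Fintype.card ι - 2) * ∑ i, ∑ j, Q i j ^ 2) := by
  simp only [wedgeDerivation, Matrix.one_apply, ite_mul, one_mul, zero_mul, mul_sub, mul_add,
    mul_ite, sub_mul, add_mul, mul_zero, sum_sub_distrib, sum_add_distrib, sum_ite_irrel,
    sum_const_zero, sum_ite_eq, mem_univ, ↓reduceIte, sum_ite_eq', sum_const, card_univ,
    nsmul_eq_mul, mul_sum, Matrix.trace, Matrix.diag_apply, sq, sum_mul]
  simp only [hQ.apply, ← mul_sum, ← sum_mul]
  ring

theorem sum_wedgeDerivation_mul_curvature (Q : Matrix ι ι ℝ) {R : ι → ι → ι → ι → ℝ}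
    (hskew₁ : ∀ i j k l, R i j k l = - R j i k l)
    (hskew₂ : ∀ i j k l, R i j k l = - R i j l k) :
    ∑ i, ∑ j, ∑ k, ∑ l, wedgeDerivation Q i j k l * R k l i j =
      4 * ∑ i, ∑ j, Q i j * ricci R j i := by
  simp only [wedgeDerivation, Matrix.one_apply, ite_mul, one_mul, zero_mul, sub_mul, add_mul,
    sum_sub_distrib, sum_add_distrib, sum_ite_irrel, sum_const_zero, sum_ite_eq, mem_univ,
    ↓reduceIte]
  -- the skew symmetries bring each of the four remaining terms to the form `Q a b * R b x a x`
  have hswap_both : ∑ x, ∑ a, ∑ b, Q a b * R x b x a = ∑ x, ∑ a, ∑ b, Q a b * R b x a x :=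
    sum_congr rfl fun x _ => sum_congr rfl fun a _ => sum_congr rfl fun b _ => by
      rw [hskew₁, hskew₂, neg_neg]
  have hswap_last : ∀ a b x, R b x x a = -R b x a x := fun a b x => hskew₂ b x x a
  have hswap_first : ∀ a b x, R a b x a = -R b a x a := fun a b x => hskew₁ a b x a
  simp only [hswap_last, hswap_first, mul_neg, sum_neg_distrib, sub_neg_eq_add]
  rw [hswap_both, sum_comm (f := fun x a => ∑ b, Q a b * R b x a x)]
  have hrhs : ∑ i, ∑ j, Q i j * ricci R j i = ∑ x, ∑ a, ∑ b, Q x b * R b a x a := by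
    simp only [ricci, Matrix.of_apply, mul_sum]
    exact sum_congr rfl fun x _ => sum_comm
  rw [hrhs]
  ring

end Tensors

section PairMatrix

variable {α : Type*} [LinearOrder α] [Fintype α]

def pairMatrix (m : α → α → α → α → ℝ) :
    Matrix {p : α × α // p.1 < p.2} {p : α × α // p.1 < p.2} ℝ :=
  Matrix.of fun p q => m p.1.1 p.1.2 q.1.1 q.1.2

theorem four_mul_trace_pairMatrix_mul {m n : α → α → α → α → ℝ}
    (hm : IsSkewInPairs m) (hn : IsSkewInPairs n) :
    4 * (pairMatrix m * pairMatrix n).trace = ∑ i, ∑ j, ∑ k, ∑ l, m i j k l * n k l i j := by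
  obtain ⟨hm₁, hm₂⟩ := hm
  obtain ⟨hn₁, hn₂⟩ := hn
  have hinner : ∀ i j, 2 • ∑ q : {p : α × α // p.1 < p.2}, m i j q.1.1 q.1.2 * n q.1.1 q.1.2 i j
      = ∑ k, ∑ l, m i j k l * n k l i j := fun i j =>
    two_nsmul_sum_pairs_lt (g := fun k l => m i j k l * n k l i j)
      (fun k l => by rw [hm₂, hn₁, neg_mul_neg])
      (fun k => by rw [show m i j k k = 0 by linarith [hm₂ i j k k], zero_mul])
  have houter := two_nsmul_sum_pairs_lt
    (g := fun i j => 2 • ∑ q : {p : α × α // p.1 < p.2}, m i j q.1.1 q.1.2 * n q.1.1 q.1.2 i j)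
    (fun i j => by
      simp only [hinner]
      exact sum_congr rfl fun k _ => sum_congr rfl fun l _ => by rw [hm₁, hn₂, neg_mul_neg])
    (fun i => by
      simp only [hinner]
      exact sum_eq_zero fun k _ => sum_eq_zero fun l _ => by
        rw [show m i i k l = 0 by linarith [hm₁ i i k l], zero_mul])
  calc 4 * (pairMatrix m * pairMatrix n).trace
      = 2 • ∑ p : {p : α × α // p.1 < p.2}, 2 • ∑ q : {p : α × α // p.1 < p.2},
          m p.1.1 p.1.2 q.1.1 q.1.2 * n q.1.1 q.1.2 p.1.1 p.1.2 := by
        simp only [Matrix.trace, Matrix.diag, Matrix.mul_apply, pairMatrix, Matrix.of_apply,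
          nsmul_eq_mul, ← mul_sum]
        ring
    _ = ∑ i, ∑ j, ∑ k, ∑ l, m i j k l * n k l i j := by
        rw [houter]
        simp only [hinner]

theorem trace_sq_pairMatrix {R : α → α → α → α → ℝ}
    (hskew₁ : ∀ i j k l, R i j k l = - R j i k l)
    (hskew₂ : ∀ i j k l, R i j k l = - R i j l k)
    (hpair : ∀ i j k l, R i j k l = R k l i j) :
    ((pairMatrix (wedgeDerivation (ricci R)) - (2 : ℝ) • pairMatrix R) *
        (pairMatrix (wedgeDerivation (ricci R)) - (2 : ℝ) • pairMatrix R)).trace =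
      (ricci R).trace ^ 2 + (Fintype.card α - 6) * ∑ i, ∑ j, ricci R i j ^ 2 +
        ∑ i, ∑ j, ∑ k, ∑ l, R i j k l ^ 2 := by
  set B := pairMatrix (wedgeDerivation (ricci R))
  set C := pairMatrix R
  have hW := isSkewInPairs_wedgeDerivation (ricci R)
  have hR : IsSkewInPairs R := ⟨fun i j k l => hskew₁ j i k l, fun i j k l => hskew₂ i j l k⟩
  have hBB : 4 * (B * B).trace =
      4 * ((ricci R).trace ^ 2 + (Fintype.card α - 2) * ∑ i, ∑ j, ricci R i j ^ 2) := by
    rw [four_mul_trace_pairMatrix_mul hW hW,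
      sum_wedgeDerivation_mul_wedgeDerivation (ricci_isSymm hpair)]
  have hBC : 4 * (B * C).trace = 4 * ∑ i, ∑ j, ricci R i j ^ 2 := by
    rw [four_mul_trace_pairMatrix_mul hW hR, sum_wedgeDerivation_mul_curvature _ hskew₁ hskew₂]
    simp only [(ricci_isSymm hpair).apply, sq]
  have hCC : 4 * (C * C).trace = ∑ i, ∑ j, ∑ k, ∑ l, R i j k l ^ 2 := by
    rw [four_mul_trace_pairMatrix_mul hR hR]
    exact sum_congr rfl fun i _ => sum_congr rfl fun j _ => sum_congr rfl fun k _ =>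
      sum_congr rfl fun l _ => by rw [hpair k l i j, sq]
  have hexpand : ((B - (2 : ℝ) • C) * (B - (2 : ℝ) • C)).trace =
      (B * B).trace - 4 * (B * C).trace + 4 * (C * C).trace := by
    simp only [sub_mul, mul_sub, Matrix.smul_mul, Matrix.mul_smul, smul_smul, Matrix.trace_sub,
      Matrix.trace_smul, smul_eq_mul, Matrix.trace_mul_comm C B]
    ring
  rw [hexpand]
  linear_combination (1 / 4 : ℝ) * hBB - hBC + hCC

end PairMatrix

theorem trace_A2_sq_dim4_general (R : Fin 4 → Fin 4 → Fin 4 → Fin 4 → ℝ)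
    (hskew₁ : ∀ i j k l, R i j k l = - R j i k l)
    (hskew₂ : ∀ i j k l, R i j k l = - R i j l k)
    (hpair : ∀ i j k l, R i j k l = R k l i j) :
    Matrix.trace ((Bmat R - (2 : ℝ) • Cmat R) * (Bmat R - (2 : ℝ) • Cmat R)) =
      (∑ i : Fin 4, ricci4 R i i) ^ 2 -
        2 * (∑ i : Fin 4, ∑ j : Fin 4, (ricci4 R i j) ^ 2) +
        ∑ i : Fin 4, ∑ j : Fin 4, ∑ k : Fin 4, ∑ l : Fin 4, (R i j k l) ^ 2 := by
  have hB : Bmat R = pairMatrix (wedgeDerivation (ricci R)) := by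
    ext p q
    simp [Bmat, pairMatrix, wedgeDerivation, kdelta, Matrix.one_apply, ricci4, ricci]
  have hC : Cmat R = pairMatrix R := rfl
  rw [hB, hC, trace_sq_pairMatrix hskew₁ hskew₂ hpair]
  simp only [Matrix.trace, Matrix.diag_apply, ricci, Matrix.of_apply, ricci4, Fintype.card_fin,
    Nat.cast_ofNat]
  ring

/-- The case `(n,ν) = (4,2)` of formula (7.7) of the paper: for the operator
`A₂ = B − 2C` on `Λ²(ℝ⁴)`, one has `Tr(A₂²) = S² − 2|Ric|² + |R|²`. -/
theorem trace_A2_sq_dim4 (R : Fin 4 → Fin 4 → Fin 4 → Fin 4 → ℝ)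
    (hskew₁ : ∀ i j k l, R i j k l = - R j i k l)
    (hskew₂ : ∀ i j k l, R i j k l = - R i j l k)
    (hpair : ∀ i j k l, R i j k l = R k l i j)
    (hbianchi : ∀ i j k l, R i j k l + R i k l j + R i l j k = 0) :
    Matrix.trace ((Bmat R - (2 : ℝ) • Cmat R) * (Bmat R - (2 : ℝ) • Cmat R)) =
      (∑ i : Fin 4, ricci4 R i i) ^ 2 -
        2 * (∑ i : Fin 4, ∑ j : Fin 4, (ricci4 R i j) ^ 2) +
        ∑ i : Fin 4, ∑ j : Fin 4, ∑ k : Fin 4, ∑ l : Fin 4, (R i j k l) ^ 2 :=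
  trace_A2_sq_dim4_general R hskew₁ hskew₂ hpair
end
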